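/- Let V be a valuation domain of rank 1 with quotient field K (i.e. V is not a field and every nonzero prime ideal of V is maximal). Let E = {s_n}_{n∈ℕ} and F = {t_n}_{n∈ℕ} be pseudo-convergent sequences in K. Then Int(E,V) = Int(F,V) if and only if s_n = t_n for every n ∈ ℕ. -/

import Mathlib

open Polynomial Finset

namespace Stmt13

variable {K : Type*} [Field K] {Γ₀ : Type*} [LinearOrderedCommGroupWithZero Γ₀]

/-- Rank one implies the value group is archimedean. -/
lemma arch (v : Valuation K Γ₀)
    (hrk1 : ∀ P : Ideal ↥v.valuationSubring, P.IsPrime → P ≠ ⊥ → P.IsMaximal)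
    {a b : K} (ha : a ≠ 0) (hb : b ≠ 0) (hva : v a < 1) :
    ∃ n : ℕ, v a ^ n < v b := by
  by_contra hcon
  push_neg at hcon
  have hva0 : v a ≠ 0 := v.ne_zero_iff.mpr ha
  have hvb0 : v b ≠ 0 := v.ne_zero_iff.mpr hb
  -- the ideal of elements infinitesimal w.r.t. all powers of `a`
  let J : Ideal ↥v.valuationSubring :=
    { carrier := {x | ∀ n : ℕ, v (x : K) ≤ v a ^ n}
      add_mem' := by
        intro x y hx hy n
        push_cast
        exact le_trans (v.map_add _ _) (max_le (hx n) (hy n))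
      zero_mem' := by intro n; simp [zero_le']
      smul_mem' := by
        intro c x hx n
        have hc : v (c : K) ≤ 1 := c.2
        have : v ((c : K) * (x : K)) ≤ 1 * v a ^ n := by
          rw [v.map_mul]; exact mul_le_mul' hc (hx n)
        simpa using this }
  have hmemJ : ∀ x : ↥v.valuationSubring, x ∈ J ↔ ∀ n : ℕ, v (x : K) ≤ v a ^ n :=
    fun x => Iff.rfl
  have hJprime : J.IsPrime := by
    constructor
    · intro htop
      have h1 : (1 : ↥v.valuationSubring) ∈ J := htop ▸ Submodule.mem_top
      have h2 := (hmemJ 1).mp h1 1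
      simp only [OneMemClass.coe_one, map_one, pow_one] at h2
      exact absurd (lt_of_le_of_lt h2 hva) (lt_irrefl _)
    · intro x y hxy
      by_contra hne
      push_neg at hne
      obtain ⟨hx, hy⟩ := hne
      obtain ⟨n, hn⟩ : ∃ n, v a ^ n < v (x : K) := by
        have := (hmemJ x).not.mp hx; push_neg at this; exact this
      obtain ⟨m, hm⟩ : ∃ m, v a ^ m < v (y : K) := by
        have := (hmemJ y).not.mp hy; push_neg at this; exact this
      have hlt : v a ^ (n + m) < v ((x : K) * (y : K)) := by
        rw [pow_add, v.map_mul]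
        exact mul_lt_mul'' hn hm zero_le' zero_le'
      have := (hmemJ (x * y)).mp hxy (n + m)
      push_cast at this
      exact absurd this (not_le_of_gt hlt)
  have hJne : J ≠ ⊥ := by
    have hbV : b ∈ v.valuationSubring := by
      rw [Valuation.mem_valuationSubring_iff]
      exact le_trans (hcon 1) (by simpa using hva.le)
    intro hbot
    have hbJ : (⟨b, hbV⟩ : ↥v.valuationSubring) ∈ J := by
      rw [hmemJ]; intro n; exact hcon n
    rw [hbot, Ideal.mem_bot] at hbJ
    exact hb (by simpa using congrArg (fun z : ↥v.valuationSubring => (z : K)) hbJ)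
  have hJmax := hrk1 J hJprime hJne
  have haV : a ∈ v.valuationSubring := by
    rw [Valuation.mem_valuationSubring_iff]; exact hva.le
  have haJ : (⟨a, haV⟩ : ↥v.valuationSubring) ∉ J := by
    rw [hmemJ]
    push_neg
    refine ⟨2, ?_⟩
    show v a ^ 2 < v a
    have h2 : v a * v a < v a * 1 := mul_lt_mul_of_pos_left hva (zero_lt_iff.mpr hva0)
    rw [pow_two]
    simpa using h2
  obtain ⟨y, i, hiJ, hyi⟩ := hJmax.exists_inv haJ
  have hy1 : v (y : K) ≤ 1 := y.2
  have hvi : v (i : K) < 1 := lt_of_le_of_lt ((hmemJ i).mp hiJ 1) (by simpa using hva)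
  have : (1 : Γ₀) ≤ max (v ((y : K) * a)) (v (i : K)) := by
    have h1 : ((y * ⟨a, haV⟩ + i : ↥v.valuationSubring) : K) = (y : K) * a + (i : K) := by
      push_cast; ring
    have := congrArg (fun z : ↥v.valuationSubring => v (z : K)) hyi
    simp only [h1, OneMemClass.coe_one, map_one] at this
    calc (1 : Γ₀) = v ((y : K) * a + (i : K)) := this.symm
      _ ≤ max (v ((y : K) * a)) (v (i : K)) := v.map_add _ _
  have hlt1 : max (v ((y : K) * a)) (v (i : K)) < 1 := by
    refine max_lt ?_ hvi
    rw [v.map_mul]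
    calc v (y : K) * v a ≤ 1 * v a := mul_le_mul' hy1 le_rfl
      _ = v a := one_mul _
      _ < 1 := hva
  exact absurd (lt_of_le_of_lt this hlt1) (lt_irrefl _)

section Seq

variable (v : Valuation K Γ₀) (s : ℕ → K)

/-- positivity of the gauge -/
lemma delta_pos (hE : StrictAnti fun n => v (s (n + 1) - s n)) (n : ℕ) :
    0 < v (s (n + 1) - s n) := by
  rcases eq_or_lt_of_le (zero_le' (a := v (s (n + 1) - s n))) with h | h
  · exfalso
    have h2 := hE (Nat.lt_succ_self n)
    simp only at h2
    rw [← h] at h2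
    exact absurd h2 (not_lt_of_ge zero_le')
  · exact h

lemma sub_ne (hE : StrictAnti fun n => v (s (n + 1) - s n)) (n : ℕ) :
    s (n + 1) - s n ≠ 0 :=
  v.ne_zero_iff.mp (ne_of_gt (delta_pos v s hE n))

/-- value of differences of sequence elements -/
lemma vdiff (hE : StrictAnti fun n => v (s (n + 1) - s n)) (k : ℕ) :
    ∀ m, k < m → v (s m - s k) = v (s (k + 1) - s k) := by
  intro m
  induction m with
  | zero => omega
  | succ m ih =>
    intro hm
    rcases Nat.lt_or_ge k m with h | h
    · have hv := ih h
      have hne : v (s (m + 1) - s m) ≠ v (s m - s k) := by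
        rw [hv]; exact ne_of_lt (hE h)
      have hdec : s (m + 1) - s k = (s (m + 1) - s m) + (s m - s k) := by ring
      rw [hdec, v.map_add_of_distinct_val hne, hv, max_eq_right]
      exact le_of_lt (hE h)
    · have : k = m := by omega
      subst this; rfl

lemma vdiff_min (hE : StrictAnti fun n => v (s (n + 1) - s n)) {i j : ℕ} (h : i ≠ j) :
    v (s i - s j) = v (s (min i j + 1) - s (min i j)) := by
  rcases lt_or_gt_of_ne h with hij | hij
  · rw [v.map_sub_swap, vdiff v s hE i j hij, min_eq_left hij.le]
  · rw [vdiff v s hE j i hij, min_eq_right hij.le]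

lemma s_inj (hE : StrictAnti fun n => v (s (n + 1) - s n)) :
    Function.Injective s := by
  intro i j hij
  by_contra hne
  have := vdiff_min v s hE hne
  rw [hij, sub_self, map_zero] at this
  exact absurd this.symm (ne_of_gt (delta_pos v s hE _))

lemma Q_ne_zero (hE : StrictAnti fun n => v (s (n + 1) - s n)) (N : ℕ) :
    (∏ k ∈ range (N + 1), (s (k + 1) - s k)) ≠ 0 :=
  prod_ne_zero_iff.mpr fun k _ => sub_ne v s hE k

/-- the test polynomials lie in Int(E,V) -/
lemma fpoly_mem (hE : StrictAnti fun n => v (s (n + 1) - s n)) (N n : ℕ) :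
    v ((C (∏ k ∈ range (N + 1), (s (k + 1) - s k))⁻¹ *
        ∏ k ∈ range (N + 1), (X - C (s k))).eval (s n)) ≤ 1 := by
  rw [eval_mul, eval_C, eval_prod]
  simp only [eval_sub, eval_X, eval_C]
  rcases Nat.lt_or_ge N n with h | h
  · -- n > N : all factors have value `δ k`
    have hval : v (∏ k ∈ range (N + 1), (s n - s k)) =
        v (∏ k ∈ range (N + 1), (s (k + 1) - s k)) := by
      rw [map_prod, map_prod]
      refine Finset.prod_congr rfl fun k hk => ?_
      exact vdiff v s hE k n (by simp only [mem_range] at hk; omega)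
    rw [v.map_mul, v.map_inv, hval,
      inv_mul_cancel₀ (v.ne_zero_iff.mpr (Q_ne_zero v s hE N))]
  · -- n ≤ N : a factor vanishes
    have : (∏ k ∈ range (N + 1), (s n - s k)) = 0 :=
      prod_eq_zero (i := n) (mem_range.mpr (by omega)) (by simp)
    rw [this, mul_zero, map_zero]
    exact zero_le'

/-- Main dichotomy: a point satisfying all the product inequalities is either an
element of the sequence or a pseudo-limit with equality at every index. -/
lemma dichotomy (v : Valuation K Γ₀)
    (hrk1 : ∀ P : Ideal ↥v.valuationSubring, P.IsPrime → P ≠ ⊥ → P.IsMaximal)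
    (s : ℕ → K) (hE : StrictAnti fun n => v (s (n + 1) - s n)) {u : K}
    (Hu : ∀ N : ℕ, v ((∏ k ∈ range (N + 1), (s (k + 1) - s k))⁻¹ *
        ∏ k ∈ range (N + 1), (u - s k)) ≤ 1) :
    (∃ j, u = s j) ∨ ∀ k, v (u - s k) = v (s (k + 1) - s k) := by
  by_cases hex : ∃ j, u = s j
  · exact Or.inl hex
  push_neg at hex
  by_cases hall : ∀ k, v (u - s k) = v (s (k + 1) - s k)
  · exact Or.inr hall
  exfalso
  push_neg at hall
  obtain ⟨k0, hk0⟩ := hall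
  have hu0 : ∀ j, u - s j ≠ 0 := fun j => sub_ne_zero.mpr (hex j)
  -- stabilization
  have stab : ∀ k1, v (s (k1 + 1) - s k1) < v (u - s k1) →
      ∀ m, k1 ≤ m → v (u - s m) = v (u - s k1) := by
    intro k1 h1 m
    induction m with
    | zero =>
      intro hm
      have h0 : k1 = 0 := Nat.le_zero.mp hm
      exact congrArg (fun j => v (u - s j)) h0.symm
    | succ m ih =>
      intro hm
      rcases Nat.lt_or_ge k1 (m + 1) with h | h
      · have hkm : k1 ≤ m := by omega
        have hvm := ih hkm
        have hlt : v (s (m + 1) - s m) < v (u - s m) := by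
          rw [hvm]
          exact lt_of_le_of_lt (hE.antitone hkm) h1
        have hdec : u - s (m + 1) = (u - s m) + (-(s (m + 1) - s m)) := by ring
        rw [hdec, v.map_add_of_distinct_val (by rw [v.map_neg]; exact (ne_of_lt hlt).symm),
          v.map_neg, max_eq_left (le_of_lt hlt), hvm]
      · have : k1 = m + 1 := by omega
        subst this; rfl
  -- find the stabilization point
  obtain ⟨k1, hk1⟩ : ∃ k1, v (s (k1 + 1) - s k1) < v (u - s k1) := by
    rcases lt_or_gt_of_ne hk0 with h | h
    · refine ⟨k0 + 1, ?_⟩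
      have hdec : u - s (k0 + 1) = (u - s k0) + (-(s (k0 + 1) - s k0)) := by ring
      have hv : v (u - s (k0 + 1)) = v (s (k0 + 1) - s k0) := by
        rw [hdec, v.map_add_of_distinct_val (by rw [v.map_neg]; exact h.ne), v.map_neg,
          max_eq_right h.le]
      rw [hv]
      exact hE (Nat.lt_succ_self k0)
    · exact ⟨k0, h⟩
  set ρ := v (u - s k1) with hρdef
  set d := v (s (k1 + 1 + 1) - s (k1 + 1)) with hddef
  have hdρ : d < ρ := lt_trans (hE (Nat.lt_succ_self k1)) hk1
  have hρ0 : ρ ≠ 0 := v.ne_zero_iff.mpr (hu0 k1)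
  have hd0 : d ≠ 0 := ne_of_gt (delta_pos v s hE (k1 + 1))
  -- product formulas
  have hstab : ∀ m, k1 ≤ m → v (u - s m) = ρ := fun m hm => stab k1 hk1 m hm
  have hP : ∀ M : ℕ, v (∏ k ∈ range (k1 + M + 1), (u - s k)) =
      v (∏ k ∈ range (k1 + 1), (u - s k)) * ρ ^ M := by
    intro M
    induction M with
    | zero => simp
    | succ M ih =>
      have : k1 + (M + 1) + 1 = (k1 + M + 1) + 1 := by ring
      rw [this, prod_range_succ, v.map_mul, ih, hstab (k1 + M + 1) (by omega), pow_succ,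
        mul_assoc]
  have hQ : ∀ M : ℕ, v (∏ k ∈ range (k1 + M + 1), (s (k + 1) - s k)) ≤
      v (∏ k ∈ range (k1 + 1), (s (k + 1) - s k)) * d ^ M := by
    intro M
    induction M with
    | zero => simp
    | succ M ih =>
      have heq : k1 + (M + 1) + 1 = (k1 + M + 1) + 1 := by ring
      rw [heq, prod_range_succ, v.map_mul, pow_succ, ← mul_assoc]
      exact mul_le_mul' ih (hE.antitone (by omega))
  -- the key inequality
  have key : ∀ M : ℕ, v (∏ k ∈ range (k1 + 1), (u - s k)) * ρ ^ M ≤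
      v (∏ k ∈ range (k1 + 1), (s (k + 1) - s k)) * d ^ M := by
    intro M
    have h := Hu (k1 + M)
    rw [v.map_mul, v.map_inv] at h
    have hQ0 : v (∏ k ∈ range (k1 + M + 1), (s (k + 1) - s k)) ≠ 0 :=
      v.ne_zero_iff.mpr (Q_ne_zero v s hE (k1 + M))
    have h' : v (∏ k ∈ range (k1 + M + 1), (u - s k)) ≤
        v (∏ k ∈ range (k1 + M + 1), (s (k + 1) - s k)) := by
      have h2 := mul_le_mul' (le_refl (v (∏ k ∈ range (k1 + M + 1), (s (k + 1) - s k)))) h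
      rwa [← mul_assoc, mul_inv_cancel₀ hQ0, one_mul, mul_one] at h2
    calc v (∏ k ∈ range (k1 + 1), (u - s k)) * ρ ^ M
        = v (∏ k ∈ range (k1 + M + 1), (u - s k)) := (hP M).symm
      _ ≤ v (∏ k ∈ range (k1 + M + 1), (s (k + 1) - s k)) := h'
      _ ≤ v (∏ k ∈ range (k1 + 1), (s (k + 1) - s k)) * d ^ M := hQ M
  -- archimedean contradiction
  have hA0 : (∏ k ∈ range (k1 + 1), (u - s k)) ≠ 0 :=
    prod_ne_zero_iff.mpr fun k _ => hu0 k
  have hB0 : (∏ k ∈ range (k1 + 1), (s (k + 1) - s k)) ≠ 0 := Q_ne_zero v s hE k1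
  have hx0 : (s (k1 + 1 + 1) - s (k1 + 1)) / (u - s (k1 + 1)) ≠ 0 :=
    div_ne_zero (sub_ne v s hE (k1 + 1)) (hu0 (k1 + 1))
  have hy0 : (∏ k ∈ range (k1 + 1), (u - s k)) / (∏ k ∈ range (k1 + 1), (s (k + 1) - s k)) ≠ 0 :=
    div_ne_zero hA0 hB0
  have hρ1 : v (u - s (k1 + 1)) = ρ := hstab (k1 + 1) (by omega)
  have hvx : v ((s (k1 + 1 + 1) - s (k1 + 1)) / (u - s (k1 + 1))) < 1 := by
    rw [v.map_div, hρ1]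
    rw [div_lt_iff₀ (lt_of_le_of_ne zero_le' (Ne.symm hρ0)), one_mul]
    exact hdρ
  obtain ⟨n, hn⟩ := arch v hrk1 hx0 hy0 hvx
  rw [v.map_div, v.map_div, hρ1] at hn
  rw [div_pow, div_lt_div_iff₀
    (lt_of_le_of_ne zero_le' (Ne.symm (pow_ne_zero n hρ0)))
    (lt_of_le_of_ne zero_le' (Ne.symm (v.ne_zero_iff.mpr hB0)))] at hn
  have := key n
  rw [mul_comm] at hn
  exact absurd (lt_of_le_of_lt this hn) (lt_irrefl _)

end Seq

/-- Under the two dichotomies, every element of `t` is an element of `s`. -/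
lemma elem (v : Valuation K Γ₀) (s t : ℕ → K)
    (hE : StrictAnti fun n => v (s (n + 1) - s n))
    (hF : StrictAnti fun n => v (t (n + 1) - t n))
    (Hts : ∀ m, (∃ j, t m = s j) ∨ ∀ k, v (t m - s k) = v (s (k + 1) - s k))
    (Hst : ∀ m, (∃ j, s m = t j) ∨ ∀ k, v (s m - t k) = v (t (k + 1) - t k)) :
    ∀ m, ∃ j, t m = s j := by
  intro m
  rcases Hts m with h | hlim
  · exact h
  exfalso
  -- `t m` would be a pseudo-limit of `E` with equality at all indices
  have hbad : ∀ j j' : ℕ, (¬∃ i, s j = t i) → (¬∃ i, s j' = t i) → j = j' := by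
    intro j j' hj hj'
    have h1 : v (s j - t m) = v (t (m + 1) - t m) := by
      rcases Hst j with h | h
      · exact absurd h hj
      · exact h m
    have h2 : v (s j' - t m) = v (t (m + 1) - t m) := by
      rcases Hst j' with h | h
      · exact absurd h hj'
      · exact h m
    have h3 : v (s j - t m) = v (s (j + 1) - s j) := by
      rw [v.map_sub_swap]; exact hlim j
    have h4 : v (s j' - t m) = v (s (j' + 1) - s j') := by
      rw [v.map_sub_swap]; exact hlim j'
    exact hE.injective (by rw [← h3, ← h4, h1, h2])
  classical
  set iFun : ℕ → ℕ := fun j => if h : ∃ i, s j = t i then h.choose else 0 with hiFun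
  have hiSpec : ∀ j, (∃ i, s j = t i) → s j = t (iFun j) := by
    intro j hj
    simp only [hiFun, dif_pos hj]
    exact hj.choose_spec
  set T := (range (m + 3)).filter (fun j => ∃ i, s j = t i) with hT
  set B := (range (m + 3)).filter (fun j => ¬∃ i, s j = t i) with hB
  have hTcard : m + 2 ≤ T.card := by
    have hneg : B.card ≤ 1 := by
      refine card_le_one.mpr ?_
      intro a ha b hb
      exact hbad a b (mem_filter.mp ha).2 (mem_filter.mp hb).2
    have hsub : range (m + 3) ⊆ T ∪ B := by
      intro j hj
      by_cases hc : ∃ i, s j = t i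
      · exact mem_union_left _ (mem_filter.mpr ⟨hj, hc⟩)
      · exact mem_union_right _ (mem_filter.mpr ⟨hj, hc⟩)
    have hcard := (card_le_card hsub).trans (card_union_le _ _)
    rw [card_range] at hcard
    omega
  have hkey : ∀ j ∈ T, v (t m - s j) =
      v (t (min m (iFun j) + 1) - t (min m (iFun j))) := by
    intro j hj
    have hex := (mem_filter.mp hj).2
    have hs : s j = t (iFun j) := hiSpec j hex
    have hmne : m ≠ iFun j := by
      intro hEq
      have : v (t m - s j) = 0 := by rw [hs, ← hEq, sub_self, map_zero]
      rw [hlim j] at this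
      exact absurd this (ne_of_gt (delta_pos v s hE j))
    rw [hs]
    exact vdiff_min v t hF hmne
  have hmaps : ∀ j ∈ T, min m (iFun j) ∈ range (m + 1) := by
    intro j _
    exact mem_range.mpr (by omega)
  have hinj : Set.InjOn (fun j => min m (iFun j)) ↑T := by
    intro j hj j' hj' hEq
    simp only at hEq
    have e1 : v (s (j + 1) - s j) = v (t (min m (iFun j) + 1) - t (min m (iFun j))) := by
      rw [← hlim j]; exact hkey j hj
    have e2 : v (s (j' + 1) - s j') = v (t (min m (iFun j') + 1) - t (min m (iFun j'))) := by
      rw [← hlim j']; exact hkey j' hj'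
    exact hE.injective (by rw [e1, e2, hEq])
  have hle := card_le_card_of_injOn _ hmaps hinj
  rw [card_range] at hle
  omega

end Stmt13

open Stmt13 Polynomial Finset in
theorem stmt_13 {K : Type*} [Field K] {Γ₀ : Type*} [LinearOrderedCommGroupWithZero Γ₀]
    (v : Valuation K Γ₀)
    (hnf : ¬IsField ↥v.valuationSubring)
    (hrk1 : ∀ P : Ideal ↥v.valuationSubring, P.IsPrime → P ≠ ⊥ → P.IsMaximal)
    (s t : ℕ → K)
    (hE : StrictAnti fun n => v (s (n + 1) - s n))
    (hF : StrictAnti fun n => v (t (n + 1) - t n)) :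
    {f : Polynomial K | ∀ n, v (f.eval (s n)) ≤ 1} =
        {f : Polynomial K | ∀ n, v (f.eval (t n)) ≤ 1} ↔
      ∀ n, s n = t n := by
  constructor
  · intro hset
    -- the product inequalities
    have HuF : ∀ m N, v ((∏ k ∈ range (N + 1), (s (k + 1) - s k))⁻¹ *
        ∏ k ∈ range (N + 1), (t m - s k)) ≤ 1 := by
      intro m N
      have hmem : (C (∏ k ∈ range (N + 1), (s (k + 1) - s k))⁻¹ *
          ∏ k ∈ range (N + 1), (X - C (s k))) ∈
          {f : Polynomial K | ∀ n, v (f.eval (s n)) ≤ 1} :=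
        fun n => fpoly_mem v s hE N n
      rw [hset] at hmem
      have h := hmem m
      simp only [Set.mem_setOf_eq, eval_mul, eval_C, eval_prod, eval_sub, eval_X] at h
      exact h
    have HuE : ∀ m N, v ((∏ k ∈ range (N + 1), (t (k + 1) - t k))⁻¹ *
        ∏ k ∈ range (N + 1), (s m - t k)) ≤ 1 := by
      intro m N
      have hmem : (C (∏ k ∈ range (N + 1), (t (k + 1) - t k))⁻¹ *
          ∏ k ∈ range (N + 1), (X - C (t k))) ∈
          {f : Polynomial K | ∀ n, v (f.eval (t n)) ≤ 1} :=
        fun n => fpoly_mem v t hF N n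
      rw [← hset] at hmem
      have h := hmem m
      simp only [Set.mem_setOf_eq, eval_mul, eval_C, eval_prod, eval_sub, eval_X] at h
      exact h
    have Hts : ∀ m, (∃ j, t m = s j) ∨ ∀ k, v (t m - s k) = v (s (k + 1) - s k) :=
      fun m => dichotomy v hrk1 s hE (HuF m)
    have Hst : ∀ m, (∃ j, s m = t j) ∨ ∀ k, v (s m - t k) = v (t (k + 1) - t k) :=
      fun m => dichotomy v hrk1 t hF (HuE m)
    have hts := elem v s t hE hF Hts Hst
    have hst := elem v t s hF hE Hst Hts
    choose σ hσ using hts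
    choose τ hτ using hst
    have hsinj := s_inj v s hE
    have htinj := s_inj v t hF
    have hσinj : Function.Injective σ := by
      intro a b hab
      exact htinj (by rw [hσ a, hσ b, hab])
    have hστ : ∀ j, σ (τ j) = j := by
      intro j
      apply hsinj
      rw [← hσ (τ j), ← hτ j]
    -- the gauge relation
    have hgauge : ∀ m, v (t (m + 1) - t m) =
        v (s (min (σ (m + 1)) (σ m) + 1) - s (min (σ (m + 1)) (σ m))) := by
      intro m
      rw [hσ (m + 1), hσ m]
      exact vdiff_min v s hE (fun h => (Nat.succ_ne_self m) (hσinj h))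
    have hμmono : ∀ m, min (σ (m + 1)) (σ m) < min (σ (m + 2)) (σ (m + 1)) := by
      intro m
      have h1 := hF (Nat.lt_succ_self m)
      simp only at h1
      rw [hgauge m, hgauge (m + 1)] at h1
      exact hE.lt_iff_gt.mp h1
    have hσlt : ∀ m, σ m < σ (m + 1) := by
      intro m
      by_contra hle
      push_neg at hle
      have hne : σ (m + 1) ≠ σ m := fun h => (Nat.succ_ne_self m) (hσinj h)
      have hlt : σ (m + 1) < σ m := lt_of_le_of_ne hle hne
      have h1 := hμmono m
      have h2 : min (σ (m + 1)) (σ m) = σ (m + 1) := min_eq_left hlt.le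
      have h3 : min (σ (m + 2)) (σ (m + 1)) ≤ σ (m + 1) := min_le_right _ _
      omega
    have hσmono : StrictMono σ := strictMono_nat_of_lt_succ hσlt
    have hσid : ∀ m, σ m = m := by
      intro m
      induction m using Nat.strong_induction_on with
      | _ m ih =>
        rcases lt_trichotomy (τ m) m with h | h | h
        · exact absurd (by rw [← ih (τ m) h, hστ m] : τ m = m) (ne_of_lt h)
        · have h2 := hστ m; rw [h] at h2; exact h2
        · have h1 : m ≤ σ m := hσmono.le_apply
          have h2 : σ m < σ (τ m) := hσmono h
          rw [hστ m] at h2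
          omega
    intro n
    rw [hσ n, hσid n]
  · intro h
    have : s = t := funext h
    rw [this]
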